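/- arXiv:2111.11530 — 4 statements merged into one kernel-verified Lean document; each statement's English description precedes it below -/
import Mathlib

section
/- Let ε ∈ ℝ and let y : ℝ → ℝ be a smooth function satisfying the perturbed Boussinesq ODE y''(x) + y(x) = ε(x + 1 + y(x)²) for all x ∈ ℝ. Then the characteristic W(x) = sin x + ε( (2/3) y(x) sin x + (4/3) y'(x) cos x ) of the approximate point symmetry generator X₁₀ = sin x ∂_y + ε( (2/3) y sin x ∂_y − (4/3) cos x ∂_x ) satisfies, for all x ∈ ℝ, W''(x) + W(x) − 2ε y(x) W(x) = ε² ( (4/3) cos x − 2(x+1) sin x − (10/3) y(x)² sin x ); in particular the approximate symmetry condition holds up to O(ε²). -/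
/-- For a solution `y` of `y'' + y = ε(x+1+y²)`, the characteristic
`W = sin x + ε((2/3) y sin x + (4/3) y' cos x)` of `X₁₀` satisfies
`W'' + W − 2εyW = ε²((4/3)cos x − 2(x+1)sin x − (10/3)y² sin x)`. -/
theorem stmt_5 (ε : ℝ) (y : ℝ → ℝ) (hy : ContDiff ℝ (⊤ : ℕ∞) y)
    (hODE : ∀ x : ℝ, iteratedDeriv 2 y x + y x = ε * (x + 1 + (y x) ^ 2)) :
    ∀ x : ℝ,
      iteratedDeriv 2
          (fun t => Real.sin t
            + ε * ((2 / 3) * y t * Real.sin t + (4 / 3) * deriv y t * Real.cos t)) x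
        + (Real.sin x
            + ε * ((2 / 3) * y x * Real.sin x + (4 / 3) * deriv y x * Real.cos x))
        - 2 * ε * y x * (Real.sin x
            + ε * ((2 / 3) * y x * Real.sin x + (4 / 3) * deriv y x * Real.cos x))
      = ε ^ 2 * ((4 / 3) * Real.cos x - 2 * (x + 1) * Real.sin x
            - (10 / 3) * (y x) ^ 2 * Real.sin x) := by
  intro x
  have hy1 : Differentiable ℝ y := hy.differentiable (by simp)
  have hy' : ContDiff ℝ ((⊤:ℕ∞) : WithTop ℕ∞) y := hy.of_le (by simp)
  have hy2 : Differentiable ℝ (deriv y) :=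
    (contDiff_infty_iff_deriv.mp hy').2.differentiable (by simp)
  have h2eq : ∀ t, deriv (deriv y) t = -y t + ε * (t + 1 + (y t) ^ 2) := by
    intro t
    have h := hODE t
    rw [show iteratedDeriv 2 y = deriv (deriv y) by
      rw [iteratedDeriv_succ, iteratedDeriv_one]] at h
    linarith
  have hW : deriv (fun t => Real.sin t
      + ε * ((2 / 3) * y t * Real.sin t + (4 / 3) * deriv y t * Real.cos t))
      = fun t => Real.cos t + ε * (((2/3) * deriv y t * Real.sin t + (2/3) * y t * Real.cos t)
        + ((4/3) * (-y t + ε * (t + 1 + (y t)^2)) * Real.cos t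
           + (4/3) * deriv y t * (-Real.sin t))) := by
    funext t
    have h1 : HasDerivAt (fun t => (2/3:ℝ) * y t * Real.sin t)
        ((2/3) * deriv y t * Real.sin t + (2/3) * y t * Real.cos t) t :=
      (((hy1 t).hasDerivAt.const_mul (2/3:ℝ)).mul (Real.hasDerivAt_sin t))
    have h2 : HasDerivAt (fun t => (4/3:ℝ) * deriv y t * Real.cos t)
        ((4/3) * deriv (deriv y) t * Real.cos t + (4/3) * deriv y t * (-Real.sin t)) t :=
      (((hy2 t).hasDerivAt.const_mul (4/3:ℝ)).mul (Real.hasDerivAt_cos t))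
    have h3 : HasDerivAt (fun t => Real.sin t
        + ε * ((2 / 3) * y t * Real.sin t + (4 / 3) * deriv y t * Real.cos t)) _ t :=
      (Real.hasDerivAt_sin t).add ((h1.add h2).const_mul ε)
    rw [h3.deriv, h2eq t]
  rw [iteratedDeriv_succ, iteratedDeriv_one, hW]
  have ha : HasDerivAt (fun t => (2/3:ℝ) * deriv y t * Real.sin t)
      ((2/3) * deriv (deriv y) x * Real.sin x + (2/3) * deriv y x * Real.cos x) x :=
    (((hy2 x).hasDerivAt.const_mul (2/3:ℝ)).mul (Real.hasDerivAt_sin x))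
  have hb : HasDerivAt (fun t => (2/3:ℝ) * y t * Real.cos t)
      ((2/3) * deriv y x * Real.cos x + (2/3) * y x * (-Real.sin x)) x :=
    (((hy1 x).hasDerivAt.const_mul (2/3:ℝ)).mul (Real.hasDerivAt_cos x))
  have hin : HasDerivAt (fun t : ℝ => -y t + ε * (t + 1 + (y t)^2))
      (-(deriv y x) + ε * (1 + 2 * y x ^ 1 * deriv y x)) x :=
    ((hy1 x).hasDerivAt.neg).add
      ((((hasDerivAt_id x).add_const 1).add ((hy1 x).hasDerivAt.pow 2)).const_mul ε)
  have hc : HasDerivAt (fun t => (4/3:ℝ) * (-y t + ε * (t + 1 + (y t)^2)) * Real.cos t)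
      ((4/3) * (-(deriv y x) + ε * (1 + 2 * y x ^ 1 * deriv y x)) * Real.cos x
        + (4/3) * (-y x + ε * (x + 1 + (y x)^2)) * (-Real.sin x)) x :=
    ((hin.const_mul (4/3:ℝ)).mul (Real.hasDerivAt_cos x))
  have hd : HasDerivAt (fun t => (4/3:ℝ) * deriv y t * (-Real.sin t))
      ((4/3) * deriv (deriv y) x * (-Real.sin x) + (4/3) * deriv y x * (-Real.cos x)) x :=
    (((hy2 x).hasDerivAt.const_mul (4/3:ℝ)).mul ((Real.hasDerivAt_sin x).neg))
  have htot : HasDerivAt (fun t => Real.cos t + ε * (((2/3) * deriv y t * Real.sin t + (2/3) * y t * Real.cos t)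
        + ((4/3) * (-y t + ε * (t + 1 + (y t)^2)) * Real.cos t
           + (4/3) * deriv y t * (-Real.sin t)))) _ x :=
    (Real.hasDerivAt_cos x).add (((ha.add hb).add (hc.add hd)).const_mul ε)
  rw [htot.deriv, h2eq x]
  ring
end

section
/- Let ε ∈ ℝ and let y : ℝ → ℝ be a smooth function satisfying the perturbed Boussinesq ODE y''(x) + y(x) = ε(x + 1 + y(x)²) for all x ∈ ℝ. Then the characteristic W(x) = cos x + ε( (2/3) y(x) cos x − (4/3) y'(x) sin x ) of the approximate point symmetry generator X₁₁ = cos x ∂_y + ε( (2/3) y cos x ∂_y + (4/3) sin x ∂_x ) satisfies, for all x ∈ ℝ, W''(x) + W(x) − 2ε y(x) W(x) = ε² ( −(4/3) sin x − 2(x+1) cos x − (10/3) y(x)² cos x ); in particular the approximate symmetry condition holds up to O(ε²). -/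
/-- For a solution `y` of `y'' + y = ε(x+1+y²)`, the characteristic
`W = cos x + ε((2/3) y cos x − (4/3) y' sin x)` of `X₁₁` satisfies
`W'' + W − 2εyW = ε²(−(4/3)sin x − 2(x+1)cos x − (10/3)y² cos x)`. -/
theorem stmt_6 (ε : ℝ) (y : ℝ → ℝ) (hy : ContDiff ℝ (⊤ : ℕ∞) y)
    (hODE : ∀ x : ℝ, iteratedDeriv 2 y x + y x = ε * (x + 1 + (y x) ^ 2)) :
    ∀ x : ℝ,
      iteratedDeriv 2
          (fun t => Real.cos t
            + ε * ((2 / 3) * y t * Real.cos t - (4 / 3) * deriv y t * Real.sin t)) x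
        + (Real.cos x
            + ε * ((2 / 3) * y x * Real.cos x - (4 / 3) * deriv y x * Real.sin x))
        - 2 * ε * y x * (Real.cos x
            + ε * ((2 / 3) * y x * Real.cos x - (4 / 3) * deriv y x * Real.sin x))
      = ε ^ 2 * (-(4 / 3) * Real.sin x - 2 * (x + 1) * Real.cos x
            - (10 / 3) * (y x) ^ 2 * Real.cos x) := by
  intro x
  have hyinf : ContDiff ℝ (⊤ : ℕ∞) y := hy.of_le (by simp)
  have hyd : Differentiable ℝ y := (contDiff_infty_iff_deriv.mp hyinf).1
  have hy1 : ContDiff ℝ (⊤ : ℕ∞) (deriv y) := (contDiff_infty_iff_deriv.mp hyinf).2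
  have hD1 : Differentiable ℝ (deriv y) := (contDiff_infty_iff_deriv.mp hy1).1
  have hY2 : ∀ t : ℝ, deriv (deriv y) t = ε * (t + 1 + (y t) ^ 2) - y t := by
    intro t
    have h := hODE t
    rw [iteratedDeriv_succ, iteratedDeriv_one] at h
    linarith
  have hA : ∀ t : ℝ, HasDerivAt y (deriv y t) t := fun t => (hyd t).hasDerivAt
  have hB : ∀ t : ℝ, HasDerivAt (deriv y) (ε * (t + 1 + (y t) ^ 2) - y t) t := by
    intro t
    have := (hD1 t).hasDerivAt
    rwa [hY2 t] at this
  set g : ℝ → ℝ := fun t => Real.cos t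
            + ε * ((2 / 3) * y t * Real.cos t - (4 / 3) * deriv y t * Real.sin t) with hgdef
  set g' : ℝ → ℝ := fun t => -Real.sin t
            + ε * ((2 / 3) * (deriv y t * Real.cos t - y t * Real.sin t)
              - (4 / 3) * ((ε * (t + 1 + (y t) ^ 2) - y t) * Real.sin t
                + deriv y t * Real.cos t)) with hg'def
  have hg : ∀ t : ℝ, HasDerivAt g (g' t) t := by
    intro t
    have h1 : HasDerivAt (fun u => (2 / 3 : ℝ) * y u * Real.cos u)
        ((2 / 3) * deriv y t * Real.cos t + (2 / 3) * y t * (-Real.sin t)) t :=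
      (((hA t).const_mul (2 / 3)).mul (Real.hasDerivAt_cos t))
    have h2 : HasDerivAt (fun u => (4 / 3 : ℝ) * deriv y u * Real.sin u)
        ((4 / 3) * (ε * (t + 1 + (y t) ^ 2) - y t) * Real.sin t
          + (4 / 3) * deriv y t * Real.cos t) t :=
      (((hB t).const_mul (4 / 3)).mul (Real.hasDerivAt_sin t))
    have := (Real.hasDerivAt_cos t).add (((h1.sub h2).const_mul ε))
    refine this.congr_deriv ?_
    simp only [hg'def]
    ring
  have hdg : deriv g = g' := funext fun t => (hg t).deriv
  -- second derivative
  have hQ : ∀ t : ℝ, HasDerivAt (fun u => ε * (u + 1 + (y u) ^ 2) - y u)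
      (ε * (1 + 2 * y t * deriv y t) - deriv y t) t := by
    intro t
    have h0 : HasDerivAt (fun u : ℝ => u + 1 + (y u) ^ 2) (1 + 2 * y t * deriv y t) t := by
      have := ((hasDerivAt_id t).add_const (1 : ℝ)).add ((hA t).pow 2)
      refine this.congr_deriv ?_
      ring
    exact (h0.const_mul ε).sub (hA t)
  have hg2 : HasDerivAt g'
      (-Real.cos x
        + ε * ((2 / 3) * (((ε * (x + 1 + (y x) ^ 2) - y x) * Real.cos x
              + deriv y x * (-Real.sin x))
            - (deriv y x * Real.sin x + y x * Real.cos x))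
          - (4 / 3) * (((ε * (1 + 2 * y x * deriv y x) - deriv y x) * Real.sin x
              + (ε * (x + 1 + (y x) ^ 2) - y x) * Real.cos x)
            + ((ε * (x + 1 + (y x) ^ 2) - y x) * Real.cos x
              + deriv y x * (-Real.sin x))))) x := by
    have h1 : HasDerivAt (fun u => deriv y u * Real.cos u - y u * Real.sin u)
        (((ε * (x + 1 + (y x) ^ 2) - y x) * Real.cos x + deriv y x * (-Real.sin x))
          - (deriv y x * Real.sin x + y x * Real.cos x)) x :=
      ((hB x).mul (Real.hasDerivAt_cos x)).sub ((hA x).mul (Real.hasDerivAt_sin x))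
    have h2 : HasDerivAt (fun u => (ε * (u + 1 + (y u) ^ 2) - y u) * Real.sin u
          + deriv y u * Real.cos u)
        (((ε * (1 + 2 * y x * deriv y x) - deriv y x) * Real.sin x
            + (ε * (x + 1 + (y x) ^ 2) - y x) * Real.cos x)
          + ((ε * (x + 1 + (y x) ^ 2) - y x) * Real.cos x
            + deriv y x * (-Real.sin x))) x :=
      ((hQ x).mul (Real.hasDerivAt_sin x)).add ((hB x).mul (Real.hasDerivAt_cos x))
    have := (Real.hasDerivAt_sin x).neg.add
      (((h1.const_mul (2/3 : ℝ)).sub (h2.const_mul (4/3 : ℝ))).const_mul ε)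
    exact this
  have h2iter : iteratedDeriv 2 g x = deriv (deriv g) x := by
    rw [show (2 : ℕ) = 1 + 1 from rfl, iteratedDeriv_succ, iteratedDeriv_one]
  rw [h2iter, hdg, hg2.deriv]
  ring
end

section
/- There exists a continuous function E : ℝ⁴ → ℝ, independent of ε and of the solution, such that for every ε ∈ ℝ and every smooth y : ℝ → ℝ satisfying y''(x) + y(x) = ε(x + 1 + y(x)²) for all x, the local symmetry characteristic W(x) = y(x) cos 2x − y'(x) sin 2x + ε[ ( y(x)²/3 − 2 y'(x)² − x − 1 ) cos 2x + ( −(8/3) y(x) y'(x) + 1 ) sin 2x ] satisfies W''(x) + W(x) − 2ε y(x) W(x) = ε² E(x, y(x), y'(x), ε) for all x ∈ ℝ. That is, X̂³ is a first-order approximate local symmetry of the perturbed Boussinesq ODE corresponding to the unstable point symmetry X₃⁰. -/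
/-- `X̂³` is a first-order approximate local symmetry of the perturbed Boussinesq
ODE `y'' + y = ε(x+1+y²)`: its characteristic `W` satisfies
`W'' + W − 2εyW = ε² E(x, y, y', ε)` for a continuous `E` independent of `ε`, `y`. -/
theorem stmt_10 :
    ∃ E : ℝ → ℝ → ℝ → ℝ → ℝ,
      Continuous (fun p : ℝ × ℝ × ℝ × ℝ => E p.1 p.2.1 p.2.2.1 p.2.2.2) ∧
      ∀ (ε : ℝ) (y : ℝ → ℝ), ContDiff ℝ (⊤ : ℕ∞) y →
        (∀ x : ℝ, iteratedDeriv 2 y x + y x = ε * (x + 1 + (y x) ^ 2)) →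
        ∀ x : ℝ,
          iteratedDeriv 2
              (fun t => y t * Real.cos (2 * t) - deriv y t * Real.sin (2 * t)
                + ε * (((y t) ^ 2 / 3 - 2 * (deriv y t) ^ 2 - t - 1) * Real.cos (2 * t)
                    + (-(8 / 3) * y t * deriv y t + 1) * Real.sin (2 * t))) x
            + (y x * Real.cos (2 * x) - deriv y x * Real.sin (2 * x)
                + ε * (((y x) ^ 2 / 3 - 2 * (deriv y x) ^ 2 - x - 1) * Real.cos (2 * x)
                    + (-(8 / 3) * y x * deriv y x + 1) * Real.sin (2 * x)))
            - 2 * ε * y x * (y x * Real.cos (2 * x) - deriv y x * Real.sin (2 * x)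
                + ε * (((y x) ^ 2 / 3 - 2 * (deriv y x) ^ 2 - x - 1) * Real.cos (2 * x)
                    + (-(8 / 3) * y x * deriv y x + 1) * Real.sin (2 * x)))
          = ε ^ 2 * E x (y x) (deriv y x) ε := by
  refine ⟨fun x u v e =>
      (8 * v - 14 / 3 * u + 8 * u ^ 2 * v + 8 * x * v) * Real.sin (2 * x)
        + (-4 * v - 4 * u * v ^ 2 - 8 / 3 * u ^ 3
            - 4 * e * (x + 1 + u ^ 2) ^ 2) * Real.cos (2 * x), ?_, ?_⟩
  · fun_prop
  intro ε y hy hode x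
  have hy' : ∀ t : ℝ, HasDerivAt y (deriv y t) t :=
    fun t => (hy.differentiable (by simp) t).hasDerivAt
  have hid : ∀ t : ℝ, HasDerivAt (fun s : ℝ => s) 1 t := fun t => hasDerivAt_id' t
  have hyinf : ContDiff ℝ ((⊤ : ℕ∞) : WithTop ℕ∞) y := hy.of_le (by simp)
  have hgd : Differentiable ℝ (deriv y) :=
    (contDiff_infty_iff_deriv.mp (contDiff_infty_iff_deriv.mp hyinf).2).1
  have hg' : ∀ t : ℝ, HasDerivAt (deriv y) (ε * (t + 1 + (y t) ^ 2) - y t) t := by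
    intro t
    have h := (hgd t).hasDerivAt
    have h2 := hode t
    rw [iteratedDeriv_succ, iteratedDeriv_one] at h2
    have he : deriv (deriv y) t = ε * (t + 1 + (y t) ^ 2) - y t := by linarith
    rwa [he] at h
  have hc : ∀ t : ℝ, HasDerivAt (fun t : ℝ => Real.cos (2 * t)) (-2 * Real.sin (2 * t)) t := by
    intro t
    have H := ((hid t).const_mul (2 : ℝ)).cos
    convert H using 1
    ring
  have hs : ∀ t : ℝ, HasDerivAt (fun t : ℝ => Real.sin (2 * t)) (2 * Real.cos (2 * t)) t := by
    intro t
    have H := ((hid t).const_mul (2 : ℝ)).sin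
    convert H using 1
    ring
  have hW : ∀ t : ℝ, HasDerivAt
      (fun t => y t * Real.cos (2 * t) - deriv y t * Real.sin (2 * t)
        + ε * (((y t) ^ 2 / 3 - 2 * (deriv y t) ^ 2 - t - 1) * Real.cos (2 * t)
            + (-(8 / 3) * y t * deriv y t + 1) * Real.sin (2 * t)))
      ((ε + (4 / 3 * ε) * (deriv y t) ^ 2 - y t + ε * (y t) ^ 2 + ε * t
          - (8 / 3 * ε ^ 2) * (y t + (y t) ^ 3 + t * y t)) * Real.sin (2 * t)
        + (ε - deriv y t - (2 / 3 * ε) * (y t * deriv y t)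
          - (4 * ε ^ 2) * (deriv y t + (y t) ^ 2 * deriv y t + t * deriv y t)) * Real.cos (2 * t))
      t := by
    intro t
    have c1 := ((((((hy' t).pow 2).div_const 3).sub (((hg' t).pow 2).const_mul 2)).sub
            (hid t)).sub_const 1).mul (hc t)
    have c2 := ((((hy' t).const_mul (-(8 / 3) : ℝ)).mul (hg' t)).add_const 1).mul (hs t)
    have H := (((hy' t).mul (hc t)).sub ((hg' t).mul (hs t))).add ((c1.add c2).const_mul ε)
    refine H.congr_deriv ?_
    push_cast
    simp only [Pi.add_apply, Pi.sub_apply, Pi.mul_apply, Pi.pow_apply]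
    ring
  have hdW : deriv (fun t => y t * Real.cos (2 * t) - deriv y t * Real.sin (2 * t)
        + ε * (((y t) ^ 2 / 3 - 2 * (deriv y t) ^ 2 - t - 1) * Real.cos (2 * t)
            + (-(8 / 3) * y t * deriv y t + 1) * Real.sin (2 * t)))
      = fun t => (ε + (4 / 3 * ε) * (deriv y t) ^ 2 - y t + ε * (y t) ^ 2 + ε * t
          - (8 / 3 * ε ^ 2) * (y t + (y t) ^ 3 + t * y t)) * Real.sin (2 * t)
        + (ε - deriv y t - (2 / 3 * ε) * (y t * deriv y t)
          - (4 * ε ^ 2) * (deriv y t + (y t) ^ 2 * deriv y t + t * deriv y t)) * Real.cos (2 * t) :=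
    funext fun t => (hW t).deriv
  have hA : HasDerivAt
      (fun t => (ε + (4 / 3 * ε) * (deriv y t) ^ 2 - y t + ε * (y t) ^ 2 + ε * t
          - (8 / 3 * ε ^ 2) * (y t + (y t) ^ 3 + t * y t)) * Real.sin (2 * t)
        + (ε - deriv y t - (2 / 3 * ε) * (y t * deriv y t)
          - (4 * ε ^ 2) * (deriv y t + (y t) ^ 2 * deriv y t + t * deriv y t)) * Real.cos (2 * t))
      ((-ε + deriv y x + 8 * ε ^ 2 * deriv y x - 8 / 3 * ε ^ 2 * y x
          + 2 / 3 * ε * y x * deriv y x + 8 / 3 * ε ^ 2 * (y x) ^ 2 * deriv y x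
          + 8 * ε ^ 2 * x * deriv y x) * Real.sin (2 * x)
        + (ε - 4 * ε ^ 3 - 4 * ε ^ 2 * deriv y x + 2 * ε * (deriv y x) ^ 2 - y x
          - 2 * ε ^ 2 * y x - 8 * ε ^ 2 * y x * (deriv y x) ^ 2 + 5 / 3 * ε * (y x) ^ 2
          - 8 * ε ^ 3 * (y x) ^ 2 - 2 * ε ^ 2 * (y x) ^ 3 - 4 * ε ^ 3 * (y x) ^ 4
          + ε * x - 8 * ε ^ 3 * x - 2 * ε ^ 2 * x * y x - 8 * ε ^ 3 * x * (y x) ^ 2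
          - 4 * ε ^ 3 * x ^ 2) * Real.cos (2 * x))
      x := by
    have i1 := (((hy' x).add ((hy' x).pow 3)).add ((hid x).mul (hy' x))).const_mul
      (8 / 3 * ε ^ 2)
    have i2 := (((hg' x).add (((hy' x).pow 2).mul (hg' x))).add
      ((hid x).mul (hg' x))).const_mul (4 * ε ^ 2)
    have d1 := ((((((hasDerivAt_const x ε).add (((hg' x).pow 2).const_mul (4 / 3 * ε))).sub
      (hy' x)).add (((hy' x).pow 2).const_mul ε)).add ((hid x).const_mul ε)).sub i1).mul (hs x)
    have d2 := ((((hasDerivAt_const x ε).sub (hg' x)).sub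
      (((hy' x).mul (hg' x)).const_mul (2 / 3 * ε))).sub i2).mul (hc x)
    have H := d1.add d2
    refine H.congr_deriv ?_
    push_cast
    simp only [Pi.add_apply, Pi.sub_apply, Pi.mul_apply, Pi.pow_apply]
    ring
  have h2 : iteratedDeriv 2
      (fun t => y t * Real.cos (2 * t) - deriv y t * Real.sin (2 * t)
        + ε * (((y t) ^ 2 / 3 - 2 * (deriv y t) ^ 2 - t - 1) * Real.cos (2 * t)
            + (-(8 / 3) * y t * deriv y t + 1) * Real.sin (2 * t))) x
      = deriv (deriv (fun t => y t * Real.cos (2 * t) - deriv y t * Real.sin (2 * t)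
        + ε * (((y t) ^ 2 / 3 - 2 * (deriv y t) ^ 2 - t - 1) * Real.cos (2 * t)
            + (-(8 / 3) * y t * deriv y t + 1) * Real.sin (2 * t)))) x := by
    rw [iteratedDeriv_succ, iteratedDeriv_one]
  rw [h2, hdW, hA.deriv]
  ring
end

section
/- There exists a continuous function E : ℝ⁴ → ℝ, independent of ε and of the solution, such that for every ε ∈ ℝ and every smooth y : ℝ → ℝ satisfying y''(x) + y(x) = ε(x + 1 + y(x)²) for all x, the local symmetry characteristic W(x) = y(x) sin 2x + y'(x) cos 2x + ε[ ( y(x)²/3 − 2 y'(x)² − x − 1 ) sin 2x + ( (8/3) y(x) y'(x) − 1 ) cos 2x ] satisfies W''(x) + W(x) − 2ε y(x) W(x) = ε² E(x, y(x), y'(x), ε) for all x ∈ ℝ. That is, X̂⁴ is a first-order approximate local symmetry of the perturbed Boussinesq ODE corresponding to the unstable point symmetry X₄⁰. -/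
noncomputable def stmtAA (ε t Y P : ℝ) : ℝ :=
  -P + ε * ((14/3)*Y*P - 1 - 4*ε*P*(t+1+Y^2) - 2*((8/3)*Y*P - 1))

noncomputable def stmtBB (ε t Y P : ℝ) : ℝ :=
  Y + ε*(t+1+Y^2) + ε*(2*(Y^2/3 - 2*P^2 - t - 1) + (8/3)*(P^2 - Y^2 + ε*Y*(t+1+Y^2)))

noncomputable def stmtDA (ε t Y P : ℝ) : ℝ :=
  -(ε*(t+1+Y^2) - Y) + ε*((14/3)*(P^2 + Y*(ε*(t+1+Y^2)-Y))
    - 4*ε*((ε*(t+1+Y^2)-Y)*(t+1+Y^2) + P*(1+2*Y*P))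
    - (16/3)*(P^2 + Y*(ε*(t+1+Y^2)-Y)))

noncomputable def stmtDB (ε t Y P : ℝ) : ℝ :=
  P + ε*(1+2*Y*P) + ε*(2*((2/3)*Y*P - 4*P*(ε*(t+1+Y^2)-Y) - 1)
    + (8/3)*(2*P*(ε*(t+1+Y^2)-Y) - 2*Y*P + ε*(P*(t+1+Y^2) + Y*(1+2*Y*P))))

/-- `X̂⁴` is a first-order approximate local symmetry of the perturbed Boussinesq
ODE `y'' + y = ε(x+1+y²)`: its characteristic `W` satisfies
`W'' + W − 2εyW = ε² E(x, y, y', ε)` for a continuous `E` independent of `ε`, `y`. -/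
theorem stmt_11 :
    ∃ E : ℝ → ℝ → ℝ → ℝ → ℝ,
      Continuous (fun p : ℝ × ℝ × ℝ × ℝ => E p.1 p.2.1 p.2.2.1 p.2.2.2) ∧
      ∀ (ε : ℝ) (y : ℝ → ℝ), ContDiff ℝ (⊤ : ℕ∞) y →
        (∀ x : ℝ, iteratedDeriv 2 y x + y x = ε * (x + 1 + (y x) ^ 2)) →
        ∀ x : ℝ,
          iteratedDeriv 2
              (fun t => y t * Real.sin (2 * t) + deriv y t * Real.cos (2 * t)
                + ε * (((y t) ^ 2 / 3 - 2 * (deriv y t) ^ 2 - t - 1) * Real.sin (2 * t)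
                    + ((8 / 3) * y t * deriv y t - 1) * Real.cos (2 * t))) x
            + (y x * Real.sin (2 * x) + deriv y x * Real.cos (2 * x)
                + ε * (((y x) ^ 2 / 3 - 2 * (deriv y x) ^ 2 - x - 1) * Real.sin (2 * x)
                    + ((8 / 3) * y x * deriv y x - 1) * Real.cos (2 * x)))
            - 2 * ε * y x * (y x * Real.sin (2 * x) + deriv y x * Real.cos (2 * x)
                + ε * (((y x) ^ 2 / 3 - 2 * (deriv y x) ^ 2 - x - 1) * Real.sin (2 * x)
                    + ((8 / 3) * y x * deriv y x - 1) * Real.cos (2 * x)))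
          = ε ^ 2 * E x (y x) (deriv y x) ε := by
  refine ⟨fun x Y P e =>
    (-(8/3) * Y^3 - 4*P - 4*Y*P^2 - 4*e*(x+1+Y^2)^2) * Real.sin (2*x)
      + (-(8*P*(x+1+Y^2)) + (14/3)*Y) * Real.cos (2*x), ?_, ?_⟩
  · fun_prop
  intro ε y hy hode x
  -- basic derivative facts
  have hy' : ContDiff ℝ (⊤:ℕ∞) (deriv y) :=
    (contDiff_infty_iff_deriv.mp (hy.of_le (by simp))).2
  have hyd : ∀ t : ℝ, HasDerivAt y (deriv y t) t := fun t =>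
    (hy.differentiable (by simp) t).hasDerivAt
  have hpd : ∀ t : ℝ, HasDerivAt (deriv y) (ε*(t+1+(y t)^2) - y t) t := by
    intro t
    have h1 : HasDerivAt (deriv y) (deriv (deriv y) t) t :=
      (hy'.differentiable (by simp) t).hasDerivAt
    have h2 : deriv (deriv y) t = ε*(t+1+(y t)^2) - y t := by
      have h := hode t
      rw [show (2:ℕ) = 1+1 from rfl, iteratedDeriv_succ, iteratedDeriv_one] at h
      norm_num at h
      linarith
    rwa [h2] at h1
  have hS : ∀ t : ℝ, HasDerivAt (fun u => Real.sin (2*u)) (2 * Real.cos (2*t)) t := by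
    intro t
    have h := ((hasDerivAt_id t).const_mul (2:ℝ)).sin
    refine h.congr_deriv ?_
    simp only [id_eq]
    ring
  have hC : ∀ t : ℝ, HasDerivAt (fun u => Real.cos (2*u)) (-(2 * Real.sin (2*t))) t := by
    intro t
    have h := ((hasDerivAt_id t).const_mul (2:ℝ)).cos
    refine h.congr_deriv ?_
    simp only [id_eq]
    ring
  -- first derivative of W
  have hW1 : ∀ t : ℝ, HasDerivAt
      (fun t => y t * Real.sin (2 * t) + deriv y t * Real.cos (2 * t)
        + ε * (((y t) ^ 2 / 3 - 2 * (deriv y t) ^ 2 - t - 1) * Real.sin (2 * t)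
            + ((8 / 3) * y t * deriv y t - 1) * Real.cos (2 * t)))
      (stmtAA ε t (y t) (deriv y t) * Real.sin (2*t)
        + stmtBB ε t (y t) (deriv y t) * Real.cos (2*t)) t := by
    intro t
    have h :=
      (((hyd t).mul (hS t)).add ((hpd t).mul (hC t))).add
        ((((((((hyd t).pow 2).div_const 3).sub (((hpd t).pow 2).const_mul 2)).sub
              (hasDerivAt_id t)).sub_const 1).mul (hS t)).add
          (((((hyd t).const_mul ((8:ℝ)/3)).mul (hpd t)).sub_const 1).mul (hC t)) |>.const_mul ε)
    refine h.congr_deriv ?_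
    simp only [stmtAA, stmtBB]
    simp only [id_eq, Pi.add_apply, Pi.sub_apply, Pi.mul_apply, Pi.pow_apply]
    push_cast
    ring
  -- second derivative of W
  have hW2 : HasDerivAt
      (fun t => stmtAA ε t (y t) (deriv y t) * Real.sin (2*t)
        + stmtBB ε t (y t) (deriv y t) * Real.cos (2*t))
      (stmtDA ε x (y x) (deriv y x) * Real.sin (2*x)
        + stmtAA ε x (y x) (deriv y x) * (2 * Real.cos (2*x))
        + (stmtDB ε x (y x) (deriv y x) * Real.cos (2*x)
        + stmtBB ε x (y x) (deriv y x) * (-(2 * Real.sin (2*x))))) x := by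
    have hA : HasDerivAt (fun u => stmtAA ε u (y u) (deriv y u))
        (stmtDA ε x (y x) (deriv y x)) x := by
      simp only [stmtAA]
      have h :=
        (hpd x).neg.add
          (((((((hyd x).const_mul ((14:ℝ)/3)).mul (hpd x)).sub_const 1).sub
              ((((hpd x).const_mul (4*ε)).mul
                (((hasDerivAt_id x).add_const 1).add ((hyd x).pow 2))))).sub
            (((((hyd x).const_mul ((8:ℝ)/3)).mul (hpd x)).sub_const 1).const_mul 2)).const_mul ε)
      refine h.congr_deriv ?_
      simp only [stmtDA]
      simp only [id_eq, Pi.add_apply, Pi.sub_apply, Pi.mul_apply, Pi.pow_apply]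
      push_cast
      ring
    have hB : HasDerivAt (fun u => stmtBB ε u (y u) (deriv y u))
        (stmtDB ε x (y x) (deriv y x)) x := by
      simp only [stmtBB]
      have h :=
        ((hyd x).add ((((hasDerivAt_id x).add_const 1).add ((hyd x).pow 2)).const_mul ε)).add
          (((((((((hyd x).pow 2).div_const 3).sub (((hpd x).pow 2).const_mul 2)).sub
                (hasDerivAt_id x)).sub_const 1).const_mul 2).add
            ((((hpd x).pow 2).sub ((hyd x).pow 2)).add
              ((((hyd x).const_mul ε).mul
                (((hasDerivAt_id x).add_const 1).add ((hyd x).pow 2)))) |>.const_mul ((8:ℝ)/3))).const_mul ε)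
      refine h.congr_deriv ?_
      simp only [stmtDB]
      simp only [id_eq, Pi.add_apply, Pi.sub_apply, Pi.mul_apply, Pi.pow_apply]
      push_cast
      ring
    exact (hA.mul (hS x)).add (hB.mul (hC x))
  -- assemble
  have hdW : deriv (fun t => y t * Real.sin (2 * t) + deriv y t * Real.cos (2 * t)
        + ε * (((y t) ^ 2 / 3 - 2 * (deriv y t) ^ 2 - t - 1) * Real.sin (2 * t)
            + ((8 / 3) * y t * deriv y t - 1) * Real.cos (2 * t)))
      = fun t => stmtAA ε t (y t) (deriv y t) * Real.sin (2*t)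
        + stmtBB ε t (y t) (deriv y t) * Real.cos (2*t) :=
    funext fun t => (hW1 t).deriv
  have h2 : iteratedDeriv 2 (fun t => y t * Real.sin (2 * t) + deriv y t * Real.cos (2 * t)
        + ε * (((y t) ^ 2 / 3 - 2 * (deriv y t) ^ 2 - t - 1) * Real.sin (2 * t)
            + ((8 / 3) * y t * deriv y t - 1) * Real.cos (2 * t))) x
      = stmtDA ε x (y x) (deriv y x) * Real.sin (2*x)
        + stmtAA ε x (y x) (deriv y x) * (2 * Real.cos (2*x))
        + (stmtDB ε x (y x) (deriv y x) * Real.cos (2*x)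
        + stmtBB ε x (y x) (deriv y x) * (-(2 * Real.sin (2*x)))) := by
    rw [iteratedDeriv_succ, iteratedDeriv_one, hdW]
    exact hW2.deriv
  rw [h2]
  simp only [stmtAA, stmtBB, stmtDA, stmtDB]
  ring
end
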